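/- Every solution of the limiting ODE Q̇(t) = h_∞(Q(t)) with zero terminal components converges to the origin: if γ : ℝ → ℝ^d is differentiable with γ'(t) = h_∞(γ(t)) for all t ≥ 0 and γ_N(0)(i,a) = 0 for all (i,a), then γ(t) → 0 as t → ∞. -/

import Mathlib

open Finset Filter

noncomputable section

/-- The limiting finite-horizon Q-learning vector field `h_∞`. -/
def hinf {S A : Type*} [Fintype S] [Fintype A] [Nonempty A] (N : ℕ)
    (p : ℕ → S → A → S → ℝ)
    (Q : Fin (N + 1) × S × A → ℝ) : Fin (N + 1) × S × A → ℝ :=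
  fun x =>
    if h : (x.1 : ℕ) < N then
      (∑ j, p x.1 x.2.1 x.2.2 j * ⨅ b : A, Q (⟨(x.1 : ℕ) + 1, by omega⟩, j, b))
        - Q x
    else 0

/-- A real function with derivative zero on `[0,∞)` and value zero at `0` tends to `0`. -/
lemma aux_const_zero {y : ℝ → ℝ} (hy : ∀ t, 0 ≤ t → HasDerivAt y 0 t) (h0 : y 0 = 0) :
    Tendsto y atTop (nhds 0) := by
  have hconst : ∀ t, 0 ≤ t → y t = 0 := by
    intro t ht
    have hcont : ContinuousOn y (Set.Icc 0 t) := fun x hx =>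
      (hy x hx.1).continuousAt.continuousWithinAt
    have := constant_of_has_deriv_right_zero hcont
      (fun x hx => (hy x hx.1).hasDerivWithinAt) t (Set.right_mem_Icc.2 ht)
    rw [this, h0]
  have : y =ᶠ[atTop] fun _ => (0 : ℝ) :=
    (eventually_ge_atTop (0:ℝ)).mono fun t ht => hconst t ht
  exact Tendsto.congr' this.symm tendsto_const_nhds

/-- Key scalar ODE lemma: if `y' = f - y` on `[0,∞)` and `f → 0` then `y → 0`. -/
lemma aux_key {y f : ℝ → ℝ} (hy : ∀ t, 0 ≤ t → HasDerivAt y (f t - y t) t)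
    (hf : Tendsto f atTop (nhds 0)) : Tendsto y atTop (nhds 0) := by
  rw [NormedAddCommGroup.tendsto_nhds_zero]
  intro ε hε
  have h2 : (0:ℝ) < ε/2 := by positivity
  obtain ⟨T₀, hT₀⟩ := Metric.tendsto_atTop.mp hf (ε/2) h2
  set T := max T₀ 0 with hTdef
  have hT0 : (0:ℝ) ≤ T := le_max_right _ _
  have hfb : ∀ t, T ≤ t → |f t| ≤ ε/2 := by
    intro t ht
    have := hT₀ t (le_trans (le_max_left _ _) ht)
    rw [Real.dist_0_eq_abs] at this
    exact this.le
  -- derivative of exp * y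
  have hprod : ∀ t, 0 ≤ t →
      HasDerivAt (fun s => Real.exp s * y s) (Real.exp t * f t) t := by
    intro t ht
    have := (Real.hasDerivAt_exp t).mul (hy t ht)
    rw [show Real.exp t * f t = Real.exp t * y t + Real.exp t * (f t - y t) by ring]
    exact this
  have hycont : ContinuousOn y (Set.Ici T) := fun x hx =>
    (hy x (le_trans hT0 hx)).continuousAt.continuousWithinAt
  have hexpycont : ContinuousOn (fun s => Real.exp s * y s) (Set.Ici T) :=
    (Real.continuous_exp.continuousOn).mul hycont
  have hintr : interior (Set.Ici T) = Set.Ioi T := interior_Ici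
  -- upper bound function is antitone
  have hup : AntitoneOn (fun s => Real.exp s * y s - (ε/2) * Real.exp s) (Set.Ici T) := by
    apply antitoneOn_of_deriv_nonpos (convex_Ici T)
    · exact hexpycont.sub ((Real.continuous_exp.continuousOn).const_smul (ε/2))
    · rw [hintr]
      intro x hx
      exact ((hprod x (le_trans hT0 (le_of_lt hx))).sub
        ((Real.hasDerivAt_exp x).const_mul (ε/2))).differentiableAt.differentiableWithinAt
    · rw [hintr]
      intro x hx
      have hx0 : (0:ℝ) ≤ x := le_trans hT0 (le_of_lt hx)
      have hd := (hprod x hx0).sub ((Real.hasDerivAt_exp x).const_mul (ε/2))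
      rw [(show HasDerivAt (fun s => Real.exp s * y s - ε / 2 * Real.exp s) _ x from hd).deriv]
      have : f x ≤ ε/2 := (le_abs_self _).trans (hfb x (le_of_lt hx))
      nlinarith [Real.exp_pos x]
  -- lower bound function is monotone
  have hlo : MonotoneOn (fun s => Real.exp s * y s + (ε/2) * Real.exp s) (Set.Ici T) := by
    apply monotoneOn_of_deriv_nonneg (convex_Ici T)
    · exact hexpycont.add ((Real.continuous_exp.continuousOn).const_smul (ε/2))
    · rw [hintr]
      intro x hx
      exact ((hprod x (le_trans hT0 (le_of_lt hx))).add
        ((Real.hasDerivAt_exp x).const_mul (ε/2))).differentiableAt.differentiableWithinAt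
    · rw [hintr]
      intro x hx
      have hx0 : (0:ℝ) ≤ x := le_trans hT0 (le_of_lt hx)
      have hd := (hprod x hx0).add ((Real.hasDerivAt_exp x).const_mul (ε/2))
      rw [(show HasDerivAt (fun s => Real.exp s * y s + ε / 2 * Real.exp s) _ x from hd).deriv]
      have : -(ε/2) ≤ f x := by
        have := (abs_le.mp (hfb x (le_of_lt hx))).1
        linarith
      nlinarith [Real.exp_pos x]
  -- combined bound: |y t| ≤ ε/2 + exp (T - t) * (|y T| + ε/2) for t ≥ T
  have hbound : ∀ t, T ≤ t → |y t| ≤ ε/2 + Real.exp (T - t) * (|y T| + ε/2) := by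
    intro t ht
    have het : (0:ℝ) < Real.exp t := Real.exp_pos t
    have hetT : (0:ℝ) < Real.exp T := Real.exp_pos T
    have hupT := hup (Set.self_mem_Ici) (Set.mem_Ici.2 ht) ht
    have hloT := hlo (Set.self_mem_Ici) (Set.mem_Ici.2 ht) ht
    simp only at hupT hloT
    have hmul2 : Real.exp t * (Real.exp (T - t) * (|y T| + ε/2))
        = Real.exp T * (|y T| + ε/2) := by
      rw [← mul_assoc, ← Real.exp_add]
      ring_nf
    have hA : 0 ≤ Real.exp T * (y T + |y T|) :=
      mul_nonneg hetT.le (by linarith [neg_abs_le (y T)])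
    have hB : 0 ≤ Real.exp T * (|y T| - y T) :=
      mul_nonneg hetT.le (by linarith [le_abs_self (y T)])
    have hC : 0 ≤ Real.exp T * ε := mul_nonneg hetT.le hε.le
    rw [abs_le]
    constructor
    · have goal' : Real.exp t * -(ε/2 + Real.exp (T - t) * (|y T| + ε/2))
          ≤ Real.exp t * y t := by nlinarith [hloT, hA, hC, hmul2]
      exact le_of_mul_le_mul_left goal' het
    · have goal'' : Real.exp t * y t
          ≤ Real.exp t * (ε/2 + Real.exp (T - t) * (|y T| + ε/2)) := by
        nlinarith [hupT, hB, hC, hmul2]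
      exact le_of_mul_le_mul_left goal'' het
  -- conclude
  have hexp0 : Tendsto (fun t => Real.exp (T - t) * (|y T| + ε/2)) atTop (nhds 0) := by
    have h1 : Tendsto (fun t : ℝ => T - t) atTop atBot := by
      simpa [sub_eq_add_neg] using
        tendsto_atBot_add_const_left atTop T tendsto_neg_atTop_atBot
    have := (Real.tendsto_exp_atBot.comp h1).mul_const (|y T| + ε/2)
    simpa using this
  have hev : ∀ᶠ t in atTop, Real.exp (T - t) * (|y T| + ε/2) < ε/2 :=
    hexp0.eventually (Iio_mem_nhds h2)
  filter_upwards [hev, eventually_ge_atTop T] with t h1 h2'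
  have := hbound t h2'
  calc ‖y t‖ = |y t| := rfl
    _ ≤ ε/2 + Real.exp (T - t) * (|y T| + ε/2) := this
    _ < ε/2 + ε/2 := by linarith
    _ = ε := by ring

/-- Finite infimum of functions each tending to `0` tends to `0`. -/
lemma aux_ciInf_tendsto {A : Type*} [Fintype A] [Nonempty A] {g : ℝ → A → ℝ}
    (h : ∀ b, Tendsto (fun t => g t b) atTop (nhds 0)) :
    Tendsto (fun t => ⨅ b, g t b) atTop (nhds 0) := by
  have hsum : Tendsto (fun t => ∑ b, |g t b|) atTop (nhds 0) := by
    have := tendsto_finset_sum (univ : Finset A) (fun b _ => (h b).abs)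
    simpa using this
  have hneg : Tendsto (fun t => -∑ b, |g t b|) atTop (nhds 0) := by
    simpa using hsum.neg
  apply tendsto_of_tendsto_of_tendsto_of_le_of_le hneg hsum
  · intro t
    apply le_ciInf
    intro b
    have h1 : |g t b| ≤ ∑ b', |g t b'| :=
      Finset.single_le_sum (f := fun b' => |g t b'|) (fun b' _ => abs_nonneg _) (mem_univ b)
    have := neg_abs_le (g t b)
    simp only [neg_le]
    linarith
  · intro t
    let b0 : A := Classical.arbitrary A
    have h1 : (⨅ b, g t b) ≤ g t b0 := ciInf_le (Finite.bddBelow_range _) b0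
    have h2 : g t b0 ≤ |g t b0| := le_abs_self _
    have h3 : |g t b0| ≤ ∑ b', |g t b'| :=
      Finset.single_le_sum (f := fun b' => |g t b'|) (fun b' _ => abs_nonneg _) (mem_univ b0)
    linarith

/-- every solution of the limiting ODE `Q̇(t) = h_∞(Q(t))` whose initial
condition has zero terminal components converges to the origin as `t → ∞`. -/
theorem ode_hinf_converges_to_origin {S A : Type*} [Fintype S] [Nonempty S]
    [Fintype A] [Nonempty A]
    (N : ℕ) (hN : 1 ≤ N)
    (p : ℕ → S → A → S → ℝ)
    (hp0 : ∀ n < N, ∀ i a j, 0 ≤ p n i a j)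
    (hp1 : ∀ n < N, ∀ i a, ∑ j, p n i a j = 1)
    (γ : ℝ → Fin (N + 1) × S × A → ℝ)
    (hγ : ∀ t : ℝ, 0 ≤ t → HasDerivAt γ (hinf N p (γ t)) t)
    (hγ0 : ∀ (i : S) (a : A), γ 0 (Fin.last N, i, a) = 0) :
    Tendsto γ atTop (nhds 0) := by
  -- componentwise derivatives
  have hcomp : ∀ (x : Fin (N+1) × S × A) (t : ℝ), 0 ≤ t →
      HasDerivAt (fun s => γ s x) (hinf N p (γ t) x) t := by
    intro x t ht
    exact hasDerivAt_pi.1 (hγ t ht) x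
  -- top level handled separately
  have htop : ∀ n : Fin (N+1), (n:ℕ) = N → ∀ (i : S) (a : A),
      Tendsto (fun t => γ t (n, i, a)) atTop (nhds 0) := by
    intro n hn i a
    have hd : ∀ t, 0 ≤ t → HasDerivAt (fun s => γ s (n, i, a)) 0 t := by
      intro t ht
      have := hcomp (n, i, a) t ht
      have hz : hinf N p (γ t) (n, i, a) = 0 := by
        unfold hinf
        rw [dif_neg]
        simp [hn]
      rwa [hz] at this
    have hne : n = Fin.last N := Fin.ext (by simpa using hn)
    exact aux_const_zero hd (by rw [hne]; exact hγ0 i a)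
  have main : ∀ k : ℕ, ∀ n : Fin (N+1), N - (n:ℕ) ≤ k → ∀ (i : S) (a : A),
      Tendsto (fun t => γ t (n, i, a)) atTop (nhds 0) := by
    intro k
    induction k with
    | zero =>
      intro n hn i a
      have hnN : (n:ℕ) = N := by have := n.isLt; omega
      exact htop n hnN i a
    | succ k ih =>
      intro n hn i a
      by_cases hlt : (n:ℕ) < N
      · set n' : Fin (N+1) := ⟨(n:ℕ)+1, by omega⟩ with hn'def
        have hf : Tendsto (fun t => ∑ j, p (n:ℕ) i a j * ⨅ b, γ t (n', j, b))
            atTop (nhds 0) := by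
          have hinfj : ∀ j : S, Tendsto (fun t => ⨅ b, γ t (n', j, b)) atTop (nhds 0) := by
            intro j
            exact aux_ciInf_tendsto (fun b => ih n' (by simp [hn'def]; omega) j b)
          have := tendsto_finset_sum (univ : Finset S)
            (fun j _ => ((hinfj j).const_mul (p (n:ℕ) i a j)))
          simpa using this
        apply aux_key ?_ hf
        intro t ht
        have := hcomp (n, i, a) t ht
        have hz : hinf N p (γ t) (n, i, a) =
            (∑ j, p (n:ℕ) i a j * ⨅ b, γ t (n', j, b)) - γ t (n, i, a) := by
          unfold hinf
          rw [dif_pos hlt]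
        rwa [hz] at this
      · have hnN : (n:ℕ) = N := by have := n.isLt; omega
        exact htop n hnN i a
  rw [tendsto_pi_nhds]
  rintro ⟨n, i, a⟩
  simpa using main N n (by omega) i a
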